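/- arXiv:2512.00670 — 2 statements merged into one kernel-verified Lean document; each statement's English description precedes it below -/
import Mathlib

section
/- Let ι be a finite nonempty type and let p, q be probability distributions on ι. Suppose i ∈ ι is a strict maximizer of p, with top-2 margin m = p(i) − max_{j ≠ i} p(j) > 0. If there exists j ≠ i with q(j) ≥ q(i) (in particular, if the argmax of q differs from i), then TV(p, q) ≥ m/2. -/
/-- A probability distribution on a finite type: nonnegative and sums to 1. -/
def IsProbDist {ι : Type*} [Fintype ι] (p : ι → ℝ) : Prop :=
  (∀ i, 0 ≤ p i) ∧ ∑ i, p i = 1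

/-- Total variation distance between two functions on a finite type. -/
noncomputable def TV {ι : Type*} [Fintype ι] (p q : ι → ℝ) : ℝ :=
  (1 / 2) * ∑ i, |p i - q i|

/-- Kullback–Leibler divergence on a finite type (terms with `p i = 0` contribute `0`,
since `Real.log 0 = 0`). -/
noncomputable def KL {ι : Type*} [Fintype ι] (p q : ι → ℝ) : ℝ :=
  ∑ i, p i * Real.log (p i / q i)

theorem abs_add_abs_le_sum_abs {ι : Type*} [Fintype ι] (f : ι → ℝ) {i j : ι} (hij : i ≠ j) :
    |f i| + |f j| ≤ ∑ k, |f k| := by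
  classical
  rw [← Finset.sum_pair (f := fun k => |f k|) hij]
  exact Finset.sum_le_sum_of_subset_of_nonneg (Finset.subset_univ _)
    (fun k _ _ => abs_nonneg (f k))

theorem sub_le_two_mul_TV_of_le {ι : Type*} [Fintype ι] {p q : ι → ℝ} {i j : ι} (hij : i ≠ j)
    (hq : q i ≤ q j) : p i - p j ≤ 2 * TV p q :=
  calc p i - p j ≤ (p i - q i) + (q j - p j) := by linarith
    _ ≤ |p i - q i| + |p j - q j| :=
      add_le_add (le_abs_self _) (abs_sub_comm (p j) (q j) ▸ le_abs_self _)
    _ ≤ 2 * TV p q := by rw [TV]; linarith [abs_add_abs_le_sum_abs (fun k => p k - q k) hij]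

theorem argmax_change_TV_lower_bound_general
    {ι : Type*} [Fintype ι] [DecidableEq ι]
    (p q : ι → ℝ) (i : ι)
    (hne : (Finset.univ.erase i).Nonempty)
    (hflip : ∃ j ≠ i, q i ≤ q j) :
    (p i - (Finset.univ.erase i).sup' hne p) / 2 ≤ TV p q := by
  obtain ⟨j, hji, hqij⟩ := hflip
  have hpj : p j ≤ (Finset.univ.erase i).sup' hne p :=
    Finset.le_sup' p (Finset.mem_erase.mpr ⟨hji, Finset.mem_univ j⟩)
  linarith [sub_le_two_mul_TV_of_le (p := p) hji.symm hqij]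

/-- Argmax change forces TV at least half the top-2 margin.
If `i` is a strict maximizer of `p` with top-2 margin `m = p i − max_{j ≠ i} p j`,
and some `j ≠ i` has `q j ≥ q i`, then `TV p q ≥ m / 2`. -/
theorem argmax_change_TV_lower_bound
    {ι : Type*} [Fintype ι] [Nonempty ι] [DecidableEq ι]
    (p q : ι → ℝ) (hp : IsProbDist p) (hq : IsProbDist q) (i : ι)
    (hne : (Finset.univ.erase i).Nonempty)
    (hmax : ∀ j ≠ i, p j < p i)
    (hflip : ∃ j ≠ i, q i ≤ q j) :
    (p i - (Finset.univ.erase i).sup' hne p) / 2 ≤ TV p q :=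
  argmax_change_TV_lower_bound_general p q i hne hflip
end

section
/- Let ι be a finite nonempty type and let p₀, p₁, …, p_Ω be strictly positive probability distributions on ι with KL(p_r ‖ p_{r−1}) ≤ δ for every r ∈ {1, …, Ω}. Let i ∈ ι be a strict maximizer of p_Ω with top-2 margin m = p_Ω(i) − max_{j ≠ i} p_Ω(j). If Ω·√(δ/2) < m/2, then i is the unique maximizer of p_r for every r ∈ {0, 1, …, Ω}. -/
section Aux
open Real Set

private lemma log_ge_one_sub_inv {t : ℝ} (ht : 0 < t) : 1 - 1/t ≤ Real.log t := by
  have h := Real.log_le_sub_one_of_pos (x := 1/t) (by positivity)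
  rw [Real.log_div one_ne_zero ht.ne', Real.log_one] at h
  linarith

private noncomputable def gfun (t : ℝ) : ℝ :=
  (t * Real.log t - t + 1) * (t + 2) - (3/2) * (t - 1)^2

private noncomputable def gfun' (t : ℝ) : ℝ :=
  Real.log t * (t + 2) + (t * Real.log t - t + 1) - 3 * (t - 1)

private lemma hasDerivAt_gfun {t : ℝ} (ht : 0 < t) : HasDerivAt gfun (gfun' t) t := by
  have h1 : HasDerivAt (fun t : ℝ => t * Real.log t - t + 1) (Real.log t) t := by
    have := (((hasDerivAt_id t).mul (Real.hasDerivAt_log ht.ne')).sub (hasDerivAt_id t)).add_const 1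
    refine this.congr_deriv ?_
    simp only [id]
    field_simp
    ring
  have h3 : HasDerivAt (fun t : ℝ => t + 2) 1 t := (hasDerivAt_id t).add_const 2
  have h4 : HasDerivAt (fun t : ℝ => (3/2 : ℝ) * (t - 1)^2) (3 * (t - 1)) t := by
    have := (((hasDerivAt_id t).sub_const 1).pow 2).const_mul (3/2 : ℝ)
    refine this.congr_deriv ?_
    simp only [id]
    ring
  have := (h1.mul h3).sub h4
  refine this.congr_deriv ?_
  unfold gfun' ; ring

private lemma hasDerivAt_gfun' {t : ℝ} (ht : 0 < t) :
    HasDerivAt gfun' (2 * Real.log t + 2/t - 2) t := by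
  have h0 : HasDerivAt (fun t : ℝ => t + 2) 1 t := (hasDerivAt_id t).add_const 2
  have h1 : HasDerivAt (fun t : ℝ => Real.log t * (t + 2)) (t⁻¹ * (t+2) + Real.log t) t := by
    have := (Real.hasDerivAt_log ht.ne').mul h0
    refine this.congr_deriv ?_; ring
  have h2 : HasDerivAt (fun t : ℝ => t * Real.log t - t + 1) (Real.log t) t := by
    have := (((hasDerivAt_id t).mul (Real.hasDerivAt_log ht.ne')).sub (hasDerivAt_id t)).add_const 1
    refine this.congr_deriv ?_
    simp only [id]
    field_simp
    ring
  have h3 : HasDerivAt (fun t : ℝ => 3 * (t - 1)) 3 t := by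
    have := ((hasDerivAt_id t).sub_const 1).const_mul (3:ℝ)
    refine this.congr_deriv ?_; ring
  have := (h1.add h2).sub h3
  refine this.congr_deriv ?_
  field_simp
  ring

private lemma gfun_nonneg {t : ℝ} (ht : 0 < t) : 0 ≤ gfun t := by
  have hcont' : ContinuousOn gfun' (Ioi 0) :=
    fun x hx => ((hasDerivAt_gfun' hx).continuousAt).continuousWithinAt
  have hcont : ContinuousOn gfun (Ioi 0) :=
    fun x hx => ((hasDerivAt_gfun hx).continuousAt).continuousWithinAt
  have hmono' : MonotoneOn gfun' (Ioi 0) := by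
    apply monotoneOn_of_deriv_nonneg (convex_Ioi 0) hcont'
    · intro x hx
      rw [interior_Ioi] at hx
      exact (hasDerivAt_gfun' hx).differentiableAt.differentiableWithinAt
    · intro x hx
      rw [interior_Ioi] at hx
      rw [(hasDerivAt_gfun' hx).deriv]
      have h := log_ge_one_sub_inv hx
      have h2 : 2/x = 2*(1/x) := by ring
      linarith
  have hg'1 : gfun' 1 = 0 := by simp [gfun']
  have key : ∀ x ∈ Ioi (0:ℝ), gfun 1 ≤ gfun x := by
    intro x hx
    rcases le_total 1 x with h | h
    · have hmono : MonotoneOn gfun (Ici 1) := by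
        apply monotoneOn_of_deriv_nonneg (convex_Ici 1)
          (hcont.mono (fun y hy => mem_Ioi.mpr (lt_of_lt_of_le one_pos hy)))
        · intro y hy
          rw [interior_Ici] at hy
          exact (hasDerivAt_gfun (lt_trans one_pos hy)).differentiableAt.differentiableWithinAt
        · intro y hy
          rw [interior_Ici] at hy
          rw [(hasDerivAt_gfun (lt_trans one_pos hy)).deriv, ← hg'1]
          exact hmono' (mem_Ioi.mpr one_pos) (mem_Ioi.mpr (lt_trans one_pos hy)) hy.le
      exact hmono (self_mem_Ici) (mem_Ici.mpr h) h
    · have hanti : AntitoneOn gfun (Ioc 0 1) := by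
        apply antitoneOn_of_deriv_nonpos (convex_Ioc 0 1)
          (hcont.mono (fun y hy => hy.1))
        · intro y hy
          rw [interior_Ioc] at hy
          exact (hasDerivAt_gfun hy.1).differentiableAt.differentiableWithinAt
        · intro y hy
          rw [interior_Ioc] at hy
          rw [(hasDerivAt_gfun hy.1).deriv, ← hg'1]
          exact hmono' (mem_Ioi.mpr hy.1) (mem_Ioi.mpr one_pos) hy.2.le
      exact hanti (mem_Ioc.mpr ⟨hx, h⟩) (mem_Ioc.mpr ⟨one_pos, le_refl 1⟩) h
  have h1 : gfun 1 = 0 := by simp [gfun]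
  have := key t ht
  linarith

/-- refined pointwise inequality -/
private lemma pointwise_ineq {x y : ℝ} (hx : 0 < x) (hy : 0 < y) :
    (3/2) * (x - y)^2 / (x + 2*y) ≤ x * Real.log (x / y) - x + y := by
  have ht : 0 < x / y := by positivity
  have hg := gfun_nonneg ht
  unfold gfun at hg
  have hlog : Real.log (x/y) = Real.log x - Real.log y := Real.log_div hx.ne' hy.ne'
  have e : x * Real.log (x/y) - x + y - (3/2) * (x - y)^2 / (x + 2*y)
      = (y^2 / (x + 2*y)) * ((x/y * Real.log (x/y) - x/y + 1) * (x/y + 2) - (3/2) * (x/y - 1)^2) := by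
    field_simp
  have hmul : 0 ≤ (y^2 / (x + 2*y)) * ((x/y * Real.log (x/y) - x/y + 1) * (x/y + 2) - (3/2) * (x/y - 1)^2) :=
    mul_nonneg (by positivity) hg
  linarith
private lemma TV_nonneg {ι : Type*} [Fintype ι] (p q : ι → ℝ) : 0 ≤ TV p q := by
  unfold TV
  positivity

private lemma TV_self {ι : Type*} [Fintype ι] (p : ι → ℝ) : TV p p = 0 := by
  simp [TV]

private lemma TV_comm {ι : Type*} [Fintype ι] (p q : ι → ℝ) : TV p q = TV q p := by
  unfold TV
  congr 1
  exact Finset.sum_congr rfl fun k _ => abs_sub_comm _ _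

private lemma TV_triangle {ι : Type*} [Fintype ι] (p q r : ι → ℝ) :
    TV p r ≤ TV p q + TV q r := by
  unfold TV
  rw [← mul_add]
  gcongr (1/2) * ?_
  rw [← Finset.sum_add_distrib]
  apply Finset.sum_le_sum
  intro k _
  calc |p k - r k| = |(p k - q k) + (q k - r k)| := by ring_nf
    _ ≤ |p k - q k| + |q k - r k| := abs_add_le _ _

/-- Pinsker's inequality on a finite type, for strictly positive distributions. -/
private lemma pinsker {ι : Type*} [Fintype ι] {p q : ι → ℝ}
    (hp : ∑ k, p k = 1) (hq : ∑ k, q k = 1)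
    (hpp : ∀ k, 0 < p k) (hqp : ∀ k, 0 < q k) :
    TV p q ≤ Real.sqrt (KL p q / 2) := by
  set f : ι → ℝ := fun k => (3/2) * (p k - q k)^2 / (p k + 2 * q k) with hf
  set w : ι → ℝ := fun k => (2/3) * (p k + 2 * q k) with hw
  have hfnn : ∀ k, 0 ≤ f k := fun k => by
    have := hpp k; have := hqp k; positivity
  have hwnn : ∀ k, 0 ≤ w k := fun k => by
    have := hpp k; have := hqp k; positivity
  have hsumf : ∑ k, f k ≤ KL p q := by
    have he : ∑ k, (p k * Real.log (p k / q k) - p k + q k) = KL p q := by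
      unfold KL
      rw [Finset.sum_add_distrib, Finset.sum_sub_distrib, hp, hq]
      ring
    rw [← he]
    exact Finset.sum_le_sum fun k _ => pointwise_ineq (hpp k) (hqp k)
  have hsumw : ∑ k, w k = 2 := by
    simp only [hw, ← Finset.mul_sum, Finset.sum_add_distrib, ← Finset.mul_sum, hp, hq]
    ring
  have hCS := Finset.sum_sq_le_sum_mul_sum_of_sq_eq_mul Finset.univ
      (r := fun k => |p k - q k|) (f := f) (g := w)
      (fun k _ => hfnn k) (fun k _ => hwnn k)
      (fun k _ => by
        have h1 : (0:ℝ) < p k + 2 * q k := by have := hpp k; have := hqp k; linarith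
        rw [sq_abs, hf, hw]
        field_simp
        exact (mul_div_cancel_right₀ _ (ne_of_gt (by linarith))).symm)
  have hKLnn : 0 ≤ KL p q := le_trans (Finset.sum_nonneg fun k _ => hfnn k) hsumf
  have hsq : (TV p q)^2 ≤ KL p q / 2 := by
    have : (∑ k, |p k - q k|)^2 ≤ 2 * KL p q := by
      calc (∑ k, |p k - q k|)^2 ≤ (∑ k, f k) * ∑ k, w k := hCS
        _ = (∑ k, f k) * 2 := by rw [hsumw]
        _ ≤ KL p q * 2 := by gcongr
        _ = 2 * KL p q := by ring
    unfold TV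
    nlinarith
  have := Real.sqrt_le_sqrt hsq
  rwa [Real.sqrt_sq (TV_nonneg p q)] at this

/-- coordinatewise bound by TV, for functions with equal sums. -/
private lemma abs_le_TV {ι : Type*} [Fintype ι] {p q : ι → ℝ}
    (hpq : ∑ k, p k = ∑ k, q k) (k : ι) : |p k - q k| ≤ TV p q := by
  set S := ∑ j, |p j - q j| with hS
  have hsum : ∑ j, (|p j - q j| + (p j - q j)) = S := by
    rw [Finset.sum_add_distrib, Finset.sum_sub_distrib, hpq]
    simp [hS]
  have hsum' : ∑ j, (|p j - q j| - (p j - q j)) = S := by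
    rw [Finset.sum_sub_distrib, Finset.sum_sub_distrib, hpq]
    simp [hS]
  have h1 : |p k - q k| + (p k - q k) ≤ S := by
    rw [← hsum]
    exact Finset.single_le_sum (f := fun j => |p j - q j| + (p j - q j))
      (fun j _ => by linarith [neg_abs_le (p j - q j)]) (Finset.mem_univ k)
  have h2 : |p k - q k| - (p k - q k) ≤ S := by
    rw [← hsum']
    exact Finset.single_le_sum (f := fun j => |p j - q j| - (p j - q j))
      (fun j _ => by
        linarith [le_abs_self (p j - q j)])
      (Finset.mem_univ k)
  unfold TV
  rcases le_total 0 (p k - q k) with h | h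
  · rw [abs_of_nonneg h] at h1 ⊢
    linarith
  · rw [abs_of_nonpos h] at h2 ⊢
    linarith

end Aux

/-- Local argmax invariance certificate.
If `KL (p r) (p (r-1)) ≤ δ` for all `r ∈ {1, …, Ω}`, `i` is a strict maximizer of `p Ω`
with top-2 margin `m`, and `Ω·√(δ/2) < m/2`, then `i` is the unique maximizer of `p r`
for every `r ∈ {0, …, Ω}`. -/
theorem local_argmax_invariance
    {ι : Type*} [Fintype ι] [Nonempty ι] [DecidableEq ι]
    (Ω : ℕ) (hΩ : 1 ≤ Ω) (δ : ℝ) (hδ : 0 ≤ δ) (p : ℕ → ι → ℝ)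
    (hprob : ∀ r ≤ Ω, IsProbDist (p r))
    (hpos : ∀ r ≤ Ω, ∀ i, 0 < p r i)
    (hKL : ∀ r ∈ Finset.Icc 1 Ω, KL (p r) (p (r - 1)) ≤ δ)
    (i : ι) (hne : (Finset.univ.erase i).Nonempty)
    (hmax : ∀ j ≠ i, p Ω j < p Ω i)
    (hmargin : (Ω : ℝ) * Real.sqrt (δ / 2) <
      (p Ω i - (Finset.univ.erase i).sup' hne (p Ω)) / 2) :
    ∀ r ≤ Ω, ∀ j ≠ i, p r j < p r i := by
  set c := Real.sqrt (δ / 2) with hc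
  have hc0 : 0 ≤ c := Real.sqrt_nonneg _
  have hstep : ∀ r, r + 1 ≤ Ω → TV (p r) (p (r + 1)) ≤ c := by
    intro r hr
    rw [TV_comm]
    have hk := hKL (r + 1) (Finset.mem_Icc.mpr ⟨Nat.le_add_left 1 r, hr⟩)
    rw [Nat.add_sub_cancel] at hk
    have hpin := pinsker (p := p (r + 1)) (q := p r)
      (hprob (r + 1) hr).2 (hprob r (by omega)).2
      (hpos (r + 1) hr) (hpos r (by omega))
    calc TV (p (r + 1)) (p r) ≤ Real.sqrt (KL (p (r + 1)) (p r) / 2) := hpin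
      _ ≤ c := by
        rw [hc]
        apply Real.sqrt_le_sqrt
        linarith
  have hchain : ∀ d r, r + d = Ω → TV (p r) (p Ω) ≤ (d : ℝ) * c := by
    intro d
    induction d with
    | zero =>
      intro r h
      simp only [Nat.add_zero] at h
      subst h
      simp [TV_self]
    | succ d ih =>
      intro r h
      have h1 : (r + 1) + d = Ω := by omega
      calc TV (p r) (p Ω) ≤ TV (p r) (p (r + 1)) + TV (p (r + 1)) (p Ω) :=
            TV_triangle _ _ _
        _ ≤ c + (d : ℝ) * c := add_le_add (hstep r (by omega)) (ih (r + 1) h1)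
        _ = ((d + 1 : ℕ) : ℝ) * c := by push_cast; ring
  intro r hr j hj
  have hT : TV (p r) (p Ω) ≤ (Ω : ℝ) * c := by
    have := hchain (Ω - r) r (by omega)
    calc TV (p r) (p Ω) ≤ ((Ω - r : ℕ) : ℝ) * c := this
      _ ≤ (Ω : ℝ) * c := by
        gcongr
        exact_mod_cast Nat.sub_le Ω r
  set m := p Ω i - (Finset.univ.erase i).sup' hne (p Ω) with hm
  have hTm : TV (p r) (p Ω) < m / 2 := lt_of_le_of_lt hT hmargin
  have hsums : ∑ k, p r k = ∑ k, p Ω k := by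
    rw [(hprob r hr).2, (hprob Ω le_rfl).2]
  have hbi := abs_le.mp (abs_le_TV hsums i)
  have hbj := abs_le.mp (abs_le_TV hsums j)
  have hjsup : p Ω j ≤ (Finset.univ.erase i).sup' hne (p Ω) :=
    Finset.le_sup' (p Ω) (Finset.mem_erase.mpr ⟨hj, Finset.mem_univ j⟩)
  have := hTm
  linarith [hbi.1, hbi.2, hbj.1, hbj.2]
end
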